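/- arXiv:2405.19798 — 2 statements merged into one kernel-verified Lean document; each statement's English description precedes it below -/
import Mathlib

section
/- Let b = (b₁,…,b_K) be a finite mixed radix basis (each b_i ≥ 2) and let 1 ≤ k < K. Let b' be the basis obtained by swapping b_k and b_{k+1}. If (a_i)_{0≤i<K} are the digits of n (0 ≤ n < b₁⋯b_K) in basis b, then the digits (a'_i) of n in basis b' satisfy a'_i = a_i for i ∉ {k−1,k}, a'_{k−1} = (a_{k−1} + b_k·a_k) mod b_{k+1}, and a'_k = (a_{k−1} + b_k·a_k) / b_{k+1} (integer division). -/
/-!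
Of the partial products `π_i = b_1 ⋯ b_i`, the swap changes only `π_k`. Hence the digits at
positions other than `k - 1, k` keep their place values, and the two digits at `k - 1, k`
encode the same number `m = a_{k-1} + b_k a_k < b_k b_{k+1}` in either basis: as
`a_{k-1} + b_k a_k` for `b` and as `m % b_{k+1} + b_{k+1} (m / b_{k+1})` for `b'`.
-/

open Finset

theorem Finset.sum_eq_sum_of_add_eq_of_eq_off {ι M : Type*} [DecidableEq ι] [AddCommMonoid M]
    {s : Finset ι} {u v : ι → M} {i j : ι} (hij : i ≠ j) (hi : i ∈ s) (hj : j ∈ s)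
    (hpair : u i + u j = v i + v j) (hoff : ∀ x, x ≠ i → x ≠ j → u x = v x) :
    ∑ x ∈ s, u x = ∑ x ∈ s, v x := by
  have hsub : {i, j} ⊆ s := insert_subset hi (singleton_subset_iff.2 hj)
  rw [← sum_sdiff hsub, ← sum_sdiff (f := v) hsub, sum_pair hij, sum_pair hij, hpair]
  congr 1
  refine sum_congr rfl fun x hx => ?_
  simp only [mem_sdiff, mem_insert, mem_singleton, not_or] at hx
  exact hoff x hx.2.1 hx.2.2

theorem Function.eq_comp_swap_of_eq {α : Sort*} {β : Type*} [DecidableEq β] {f g : β → α}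
    {l m : β} (hl : g l = f m) (hm : g m = f l) (hoff : ∀ j, j ≠ l → j ≠ m → g j = f j) :
    g = f ∘ Equiv.swap l m := by
  funext j
  rcases eq_or_ne j l with rfl | hjl
  · simpa using hl
  rcases eq_or_ne j m with rfl | hjm
  · simpa using hm
  simpa [Equiv.swap_apply_of_ne_of_ne hjl hjm] using hoff j hjl hjm

theorem Finset.prod_range_comp_swap {M : Type*} [CommMonoid M] (f : ℕ → M) {l i : ℕ}
    (hi : i ≠ l + 1) :
    ∏ j ∈ range i, f (Equiv.swap l (l + 1) j) = ∏ j ∈ range i, f j := by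
  rcases le_or_gt i l with hil | hli
  · refine prod_congr rfl fun j hj => ?_
    rw [mem_range] at hj
    rw [Equiv.swap_apply_of_ne_of_ne (by omega) (by omega)]
  · refine Equiv.Perm.prod_comp _ _ _ fun j hj => ?_
    have : j = l ∨ j = l + 1 := by
      by_contra! h
      exact hj (Equiv.swap_apply_of_ne_of_ne h.1 h.2)
    simp only [coe_range, Set.mem_Iio]
    omega

theorem Nat.add_mul_div_lt_of_lt_of_lt {x y p q : ℕ} (hx : x < p) (hy : y < q) :
    (x + p * y) / q < p := by
  rw [Nat.div_lt_iff_lt_mul (by omega)]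
  exact Nat.add_mul_lt_mul_of_lt_of_lt hx hy

theorem Nat.mul_eq_mod_mul_add_div_mul (m q P : ℕ) : m * P = m % q * P + m / q * (P * q) := by
  conv_lhs => rw [← Nat.mod_add_div' m q]
  ring

theorem stmt5_general (K k : ℕ) (hk1 : 1 ≤ k) (hk2 : k < K) (b : ℕ → ℕ)
    (n : ℕ)
    (a : ℕ → ℕ) (ha : ∀ i < K, a i < b (i + 1))
    (hsum : n = ∑ i ∈ Finset.range K, a i * ∏ j ∈ Finset.range i, b (j + 1))
    (b' : ℕ → ℕ)
    (hb'1 : b' k = b (k + 1)) (hb'2 : b' (k + 1) = b k)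
    (hb'3 : ∀ i, i ≠ k → i ≠ k + 1 → b' i = b i)
    (a' : ℕ → ℕ)
    (ha'1 : a' (k - 1) = (a (k - 1) + b k * a k) % b (k + 1))
    (ha'2 : a' k = (a (k - 1) + b k * a k) / b (k + 1))
    (ha'3 : ∀ i, i ≠ k - 1 → i ≠ k → a' i = a i) :
    (∀ i < K, a' i < b' (i + 1)) ∧
      n = ∑ i ∈ Finset.range K, a' i * ∏ j ∈ Finset.range i, b' (j + 1) := by
  obtain ⟨l, rfl⟩ : ∃ l, k = l + 1 := ⟨k - 1, by omega⟩
  simp only [Nat.add_sub_cancel] at ha'1 ha'2 ha'3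
  have hb' : (fun j => b' (j + 1)) = (fun j => b (j + 1)) ∘ Equiv.swap l (l + 1) :=
    Function.eq_comp_swap_of_eq hb'1 hb'2 fun j hjl hjl1 => hb'3 (j + 1) (by omega) (by omega)
  have hπ (i : ℕ) (hi : i ≠ l + 1) :
      ∏ j ∈ range i, b' (j + 1) = ∏ j ∈ range i, b (j + 1) := by
    rw [← prod_range_comp_swap (fun j => b (j + 1)) hi]
    exact prod_congr rfl fun j _ => congrFun hb' j
  refine ⟨fun i hi => ?_, hsum.trans ?_⟩
  · rcases eq_or_ne i l with rfl | hil
    · rw [ha'1, hb'1]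
      exact Nat.mod_lt _ ((Nat.zero_le _).trans_lt (ha (i + 1) hk2))
    rcases eq_or_ne i (l + 1) with rfl | hil1
    · rw [ha'2, hb'2]
      exact Nat.add_mul_div_lt_of_lt_of_lt (ha l (by omega)) (ha (l + 1) hk2)
    rw [ha'3 i hil hil1, hb'3 (i + 1) (by omega) (by omega)]
    exact ha i hi
  refine sum_eq_sum_of_add_eq_of_eq_off (i := l) (j := l + 1) (by omega)
    (mem_range.2 (by omega)) (mem_range.2 hk2) ?_
    fun x hxl hxl1 => by rw [ha'3 x hxl hxl1, hπ x hxl1]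
  rw [prod_range_succ, prod_range_succ, hπ l (by omega), hb'1, ha'1, ha'2,
    ← Nat.mul_eq_mod_mul_add_div_mul]
  ring

/-- Change of digits of `n` under the transposition of two consecutive entries `b_k, b_{k+1}`
of a finite mixed radix basis `(b_1,…,b_K)`: only the digits at positions `k−1` and `k`
change, via `a'_{k−1} = (a_{k−1} + b_k·a_k) % b_{k+1}` and
`a'_k = (a_{k−1} + b_k·a_k) / b_{k+1}`. -/
theorem stmt5 (K k : ℕ) (hk1 : 1 ≤ k) (hk2 : k < K) (b : ℕ → ℕ)
    (hb : ∀ i, 1 ≤ i → i ≤ K → 2 ≤ b i) (n : ℕ)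
    (hn : n < ∏ j ∈ Finset.range K, b (j + 1))
    (a : ℕ → ℕ) (ha : ∀ i < K, a i < b (i + 1))
    (hsum : n = ∑ i ∈ Finset.range K, a i * ∏ j ∈ Finset.range i, b (j + 1))
    (b' : ℕ → ℕ)
    (hb'1 : b' k = b (k + 1)) (hb'2 : b' (k + 1) = b k)
    (hb'3 : ∀ i, i ≠ k → i ≠ k + 1 → b' i = b i)
    (a' : ℕ → ℕ)
    (ha'1 : a' (k - 1) = (a (k - 1) + b k * a k) % b (k + 1))
    (ha'2 : a' k = (a (k - 1) + b k * a k) / b (k + 1))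
    (ha'3 : ∀ i, i ≠ k - 1 → i ≠ k → a' i = a i) :
    (∀ i < K, a' i < b' (i + 1)) ∧
      n = ∑ i ∈ Finset.range K, a' i * ∏ j ∈ Finset.range i, b' (j + 1) :=
  stmt5_general K k hk1 hk2 b n a ha hsum b' hb'1 hb'2 hb'3 a' ha'1 ha'2 ha'3
end

section
/- For integers p₁, p₂, p₃ ≥ 2, the maps ψ_{p₁,p₂}, ψ_{p₁,p₃}, ψ_{p₂,p₃} satisfy the set-theoretic Yang–Baxter equation: ι₁(ψ_{p₂,p₃}) ∘ ι₂(ψ_{p₁,p₃}) ∘ ι₁(ψ_{p₁,p₂}) = ι₂(ψ_{p₁,p₂}) ∘ ι₁(ψ_{p₁,p₃}) ∘ ι₂(ψ_{p₂,p₃}) as maps S₁×S₂×S₃ → S₃×S₂×S₁, where S_i = {0,…,p_i−1}. -/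
/-- Key arithmetic lemma: if `a < p`, then applying the local move to `(a, m)`
produces the digits of `a + p*m` in a mixed-radix sense. -/
lemma stmt10_key (a m p q : ℕ) (ha : a < p) (hq : 0 < q) :
    (a + p * (m % q)) % q = (a + p * m) % q ∧
    (a + p * (m % q)) / q = ((a + p * m) / q) % p ∧
    m / q = ((a + p * m) / q) / p := by
  have hpm : p * m = p * (m % q) + q * (p * (m / q)) := by
    conv_lhs => rw [← Nat.mod_add_div m q]
    ring
  have hn : a + p * m = (a + p * (m % q)) + q * (p * (m / q)) := by
    rw [hpm, Nat.add_assoc]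
  have hmq : m % q < q := Nat.mod_lt _ hq
  have hr : a + p * (m % q) < p * q := by nlinarith
  have hdiv : (a + p * m) / q = (a + p * (m % q)) / q + p * (m / q) := by
    rw [hn, Nat.add_mul_div_left _ _ hq]
  have hrq : (a + p * (m % q)) / q < p := by
    rw [Nat.div_lt_iff_lt_mul hq]
    nlinarith
  refine ⟨?_, ?_, ?_⟩
  · rw [hn, Nat.add_mul_mod_self_left]
  · rw [hdiv, Nat.add_mul_mod_self_left, Nat.mod_eq_of_lt hrq]
  · rw [hdiv, Nat.add_mul_div_left _ _ (by omega : 0 < p),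
      Nat.div_eq_of_lt hrq, Nat.zero_add]

/-- Set-theoretic Yang–Baxter equation for the maps `ψ_{p,q}(u,v) = ((u+pv) % q, (u+pv) / q)`:
`ι₁(ψ_{p₂,p₃}) ∘ ι₂(ψ_{p₁,p₃}) ∘ ι₁(ψ_{p₁,p₂}) = ι₂(ψ_{p₁,p₂}) ∘ ι₁(ψ_{p₁,p₃}) ∘ ι₂(ψ_{p₂,p₃})`
on `{0,…,p₁−1}×{0,…,p₂−1}×{0,…,p₃−1}`. -/
theorem stmt10 (p1 p2 p3 : ℕ) (h1 : 2 ≤ p1) (h2 : 2 ≤ p2) (h3 : 2 ≤ p3) :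
    ∀ x y z : ℕ, x < p1 → y < p2 → z < p3 →
      let ψ : ℕ → ℕ → ℕ × ℕ → ℕ × ℕ :=
        fun p q uv => ((uv.1 + p * uv.2) % q, (uv.1 + p * uv.2) / q)
      let ι1 : (ℕ × ℕ → ℕ × ℕ) → ℕ × ℕ × ℕ → ℕ × ℕ × ℕ :=
        fun f t => ((f (t.1, t.2.1)).1, (f (t.1, t.2.1)).2, t.2.2)
      let ι2 : (ℕ × ℕ → ℕ × ℕ) → ℕ × ℕ × ℕ → ℕ × ℕ × ℕ :=
        fun f t => (t.1, f (t.2.1, t.2.2))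
      ι1 (ψ p2 p3) (ι2 (ψ p1 p3) (ι1 (ψ p1 p2) (x, y, z))) =
        ι2 (ψ p1 p2) (ι1 (ψ p1 p3) (ι2 (ψ p2 p3) (x, y, z))) := by
  intro x y z hx hy hz ψ ι1 ι2
  simp only [ψ, ι1, ι2]
  have hp2 : 0 < p2 := by omega
  have hp3 : 0 < p3 := by omega
  have e1 : (x + p1 * y) % p2 < p2 := Nat.mod_lt _ hp2
  obtain ⟨l1, l2, l3⟩ :=
    stmt10_key ((x + p1 * y) % p2) ((x + p1 * y) / p2 + p1 * z) p2 p3 e1 hp3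
  obtain ⟨r1, r2, r3⟩ := stmt10_key x (y + p2 * z) p1 p3 hx hp3
  have hL : (x + p1 * y) % p2 + p2 * ((x + p1 * y) / p2 + p1 * z)
      = x + p1 * (y + p2 * z) := by
    have h := Nat.mod_add_div (x + p1 * y) p2
    rw [Nat.mul_add, ← Nat.add_assoc, h]
    ring
  rw [Prod.mk.injEq, Prod.mk.injEq]
  refine ⟨?_, ?_, ?_⟩
  · rw [l1, hL, r1]
  · rw [l2, hL, r2, r3, Nat.mod_add_div]
  · rw [l3, hL, r2, r3, Nat.mod_add_div]
end
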